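/- Let k ≥ 3, let G be a K₂ ∨ P_k-saturated graph, let v be a vertex of G, and let S be an independent set of G with S ⊆ N_G(v) and |S| ≥ 2. Then there is no vertex u of G with u ∉ N_G[v] such that N_G(u) ∩ N_G(v) = S. -/

import Mathlib

open SimpleGraph

/-- The join `G₁ ∨ G₂` of two simple graphs: disjoint union plus all edges in between. -/
def SimpleGraph.graphJoin {α β : Type*} (G : SimpleGraph α) (H : SimpleGraph β) :
    SimpleGraph (α ⊕ β) where
  Adj x y :=
    match x, y with
    | Sum.inl a, Sum.inl b => G.Adj a b
    | Sum.inr a, Sum.inr b => H.Adj a b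
    | Sum.inl _, Sum.inr _ => True
    | Sum.inr _, Sum.inl _ => True
  symm := by
    constructor
    rintro (a | a) (b | b) h
    · exact G.adj_symm h
    · trivial
    · trivial
    · exact H.adj_symm h
  loopless := by
    constructor
    rintro (a | a) h
    · exact G.irrefl h
    · exact H.irrefl h

/-- `H.Contains G` : `G` contains a copy of `H`, i.e. a subgraph isomorphic to `H`,
equivalently there is an injective graph homomorphism `H →g G`. -/
def SimpleGraph.Contains {α β : Type*} (H : SimpleGraph α) (G : SimpleGraph β) : Prop :=
  ∃ f : H →g G, Function.Injective f

/-- `H.IsSatur G` : the graph `G` is `H`-saturated: it contains no copy of `H`, but adding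
any edge between distinct nonadjacent vertices creates a copy of `H`. -/
def SimpleGraph.IsSatur {α β : Type*} (H : SimpleGraph α) (G : SimpleGraph β) : Prop :=
  ¬ H.Contains G ∧ ∀ u v : β, u ≠ v → ¬ G.Adj u v →
    H.Contains (G ⊔ SimpleGraph.fromEdgeSet {s(u, v)})

/-- `satNumber n H` : the saturation number of `H`, the minimum number of edges in an
`H`-saturated graph of order `n`. -/
noncomputable def satNumber {α : Type*} (n : ℕ) (H : SimpleGraph α) : ℕ :=
  sInf {m : ℕ | ∃ G : SimpleGraph (Fin n), H.IsSatur G ∧ G.edgeSet.ncard = m}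


lemma graphJoin_aux {k : ℕ} (hk : 3 ≤ k) {a b : Fin 2 ⊕ Fin k}
    (hab : ((⊤ : SimpleGraph (Fin 2)).graphJoin (SimpleGraph.pathGraph k)).Adj a b) :
    ∃ c₁ c₂ : Fin 2 ⊕ Fin k,
      ((⊤ : SimpleGraph (Fin 2)).graphJoin (SimpleGraph.pathGraph k)).Adj c₁ a ∧
      ((⊤ : SimpleGraph (Fin 2)).graphJoin (SimpleGraph.pathGraph k)).Adj c₁ b ∧
      ((⊤ : SimpleGraph (Fin 2)).graphJoin (SimpleGraph.pathGraph k)).Adj c₂ a ∧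
      ((⊤ : SimpleGraph (Fin 2)).graphJoin (SimpleGraph.pathGraph k)).Adj c₂ b ∧
      ((⊤ : SimpleGraph (Fin 2)).graphJoin (SimpleGraph.pathGraph k)).Adj c₁ c₂ := by
  obtain (i | i) := a <;> obtain (j | j) := b
  · refine ⟨Sum.inr ⟨0, by omega⟩, Sum.inr ⟨1, by omega⟩, trivial, trivial, trivial, trivial, ?_⟩
    show (SimpleGraph.pathGraph k).Adj _ _
    rw [pathGraph_adj]; left; rfl
  · have hi : ((⊤ : SimpleGraph (Fin 2)).Adj (i + 1) i) := by
      fin_cases i <;> decide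
    by_cases h : j.val + 1 < k
    · refine ⟨Sum.inl (i + 1), Sum.inr ⟨j.val + 1, h⟩, hi, trivial, trivial, ?_, trivial⟩
      show (SimpleGraph.pathGraph k).Adj _ _
      rw [pathGraph_adj]; right; rfl
    · have hj1 : j.val - 1 < k := by omega
      refine ⟨Sum.inl (i + 1), Sum.inr ⟨j.val - 1, hj1⟩, hi, trivial, trivial, ?_, trivial⟩
      show (SimpleGraph.pathGraph k).Adj _ _
      rw [pathGraph_adj]; left; simp; omega
  · have hj : ((⊤ : SimpleGraph (Fin 2)).Adj (j + 1) j) := by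
      fin_cases j <;> decide
    by_cases h : i.val + 1 < k
    · refine ⟨Sum.inl (j + 1), Sum.inr ⟨i.val + 1, h⟩, trivial, hj, ?_, trivial, trivial⟩
      show (SimpleGraph.pathGraph k).Adj _ _
      rw [pathGraph_adj]; right; rfl
    · have hi1 : i.val - 1 < k := by omega
      refine ⟨Sum.inl (j + 1), Sum.inr ⟨i.val - 1, hi1⟩, trivial, hj, ?_, trivial, trivial⟩
      show (SimpleGraph.pathGraph k).Adj _ _
      rw [pathGraph_adj]; left; simp; omega
  · refine ⟨Sum.inl 0, Sum.inl 1, trivial, trivial, trivial, trivial, ?_⟩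
    show (⊤ : SimpleGraph (Fin 2)).Adj 0 1
    decide

theorem no_vertex_with_independent_common_neighborhood {V : Type*} (k : ℕ) (hk : 3 ≤ k)
    (G : SimpleGraph V)
    (hG : ((⊤ : SimpleGraph (Fin 2)).graphJoin (SimpleGraph.pathGraph k)).IsSatur G)
    (v : V) (S : Set V) (hSv : S ⊆ G.neighborSet v) (hS : 2 ≤ S.ncard)
    (hindep : S.Pairwise fun a b => ¬ G.Adj a b) :
    ¬ ∃ u : V, u ∉ insert v (G.neighborSet v) ∧
        G.neighborSet u ∩ G.neighborSet v = S := by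
  rintro ⟨u, hu, hSeq⟩
  have huv : u ≠ v := by rintro rfl; exact hu (Set.mem_insert _ _)
  have hnadj : ¬ G.Adj u v := fun h => hu (Set.mem_insert_iff.2 (Or.inr h.symm))
  obtain ⟨f, hfinj⟩ := hG.2 u v huv hnadj
  have key : ∀ x y : V, (G ⊔ SimpleGraph.fromEdgeSet {s(u, v)}).Adj x y → x ≠ u → x ≠ v →
      G.Adj x y := by
    intro x y hxy hxu hxv
    rcases hxy with h | h
    · exact h
    · exfalso
      rw [SimpleGraph.fromEdgeSet_adj, Set.mem_singleton_iff, Sym2.eq_iff] at h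
      rcases h.1 with ⟨h1, _⟩ | ⟨h1, _⟩
      · exact hxu h1
      · exact hxv h1
  have step1 : ∃ a b, ((⊤ : SimpleGraph (Fin 2)).graphJoin (SimpleGraph.pathGraph k)).Adj a b ∧
      f a = u ∧ f b = v := by
    by_contra hcon
    push_neg at hcon
    apply hG.1
    refine ⟨⟨f, ?_⟩, hfinj⟩
    intro a b hab
    have h := f.map_adj hab
    rcases h with h | h
    · exact h
    · exfalso
      rw [SimpleGraph.fromEdgeSet_adj, Set.mem_singleton_iff, Sym2.eq_iff] at h
      rcases h.1 with ⟨h1, h2⟩ | ⟨h1, h2⟩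
      · exact hcon a b hab h1 h2
      · exact hcon b a hab.symm h2 h1
  obtain ⟨a, b, hab, hfa, hfb⟩ := step1
  have hmem : ∀ c, ((⊤ : SimpleGraph (Fin 2)).graphJoin (SimpleGraph.pathGraph k)).Adj c a →
      ((⊤ : SimpleGraph (Fin 2)).graphJoin (SimpleGraph.pathGraph k)).Adj c b →
      f c ∈ S ∧ f c ≠ u ∧ f c ≠ v := by
    intro c hca hcb
    have hcu : f c ≠ u := fun h => hca.ne (hfinj (h.trans hfa.symm))
    have hcv : f c ≠ v := fun h => hcb.ne (hfinj (h.trans hfb.symm))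
    have h1 : G.Adj (f c) u := by
      have := key _ _ (f.map_adj hca) hcu hcv; rwa [hfa] at this
    have h2 : G.Adj (f c) v := by
      have := key _ _ (f.map_adj hcb) hcu hcv; rwa [hfb] at this
    refine ⟨?_, hcu, hcv⟩
    rw [← hSeq]
    exact ⟨h1.symm, h2.symm⟩
  obtain ⟨c₁, c₂, h1a, h1b, h2a, h2b, h12⟩ := graphJoin_aux hk hab
  obtain ⟨m1, hcu1, hcv1⟩ := hmem c₁ h1a h1b
  obtain ⟨m2, _, _⟩ := hmem c₂ h2a h2b
  have hne : f c₁ ≠ f c₂ := fun h => h12.ne (hfinj h)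
  exact hindep m1 m2 hne (key _ _ (f.map_adj h12) hcu1 hcv1)
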